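/- The Lie algebra rr'₃,₀ with nonzero brackets [e₁,e₂] = −e₃, [e₁,e₃] = e₂ admits no endomorphism K with K² = Id, vanishing Nijenhuis tensor, and tr(K) = 0, such that ω(K·, K·) = −ω(·,·) where ω = e¹⁴ + e²³. -/
import Mathlib


/-- The bracket of the Lie algebra `rr'₃,₀` on `ℝ⁴` (0-indexed):
`[e₀,e₁] = −e₂`, `[e₀,e₂] = e₁`. -/
def brRRp30 (u v : Fin 4 → ℝ) : Fin 4 → ℝ :=
  ![0, u 0 * v 2 - u 2 * v 0, -(u 0 * v 1 - u 1 * v 0), 0]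

/-- The 2-form `ω = e¹⁴ + e²³` (0-indexed: `e⁰³ + e¹²`). -/
def omRRp30 (u v : Fin 4 → ℝ) : ℝ :=
  u 0 * v 3 - u 3 * v 0 + (u 1 * v 2 - u 2 * v 1)

/-- The Lie algebra `rr'₃,₀` admits no para-complex structure `K` (i.e. `K² = Id`,
`tr K = 0`, vanishing Nijenhuis tensor) compatible with `ω = e¹⁴ + e²³` in the sense
`ω(K·, K·) = −ω(·,·)`. -/
theorem stmt7 :
    ¬ ∃ K : (Fin 4 → ℝ) →ₗ[ℝ] (Fin 4 → ℝ),
      (∀ u, K (K u) = u) ∧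
      LinearMap.trace ℝ (Fin 4 → ℝ) K = 0 ∧
      (∀ u v, brRRp30 u v + brRRp30 (K u) (K v)
          - K (brRRp30 (K u) v) - K (brRRp30 u (K v)) = 0) ∧
      (∀ u v, omRRp30 (K u) (K v) = -omRRp30 u v) := by
  rintro ⟨K, -, -, hN, hω⟩
  have key : ∀ u v, K (brRRp30 u v)
      = (u 0 * v 2 - u 2 * v 0) • K ![(0:ℝ), 1, 0, 0]
        + (-(u 0 * v 1 - u 1 * v 0)) • K ![(0:ℝ), 0, 1, 0] := by
    intro u v
    have h : brRRp30 u v = (u 0 * v 2 - u 2 * v 0) • ![(0:ℝ), 1, 0, 0]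
        + (-(u 0 * v 1 - u 1 * v 0)) • ![(0:ℝ), 0, 1, 0] := by
      funext i; fin_cases i <;> simp [brRRp30]
    rw [h, map_add, map_smul, map_smul]
  have h0 := congrFun (hN ![0, 1, 0, 0] ![0, 0, 1, 0]) 0
  have h1 := congrFun (hN ![1, 0, 0, 0] ![0, 1, 0, 0]) 2
  have h2 := congrFun (hN ![1, 0, 0, 0] ![0, 0, 1, 0]) 1
  have h3 := hω ![0, 1, 0, 0] ![0, 0, 1, 0]
  simp only [key, omRRp30, Matrix.cons_val_zero, Matrix.cons_val_one, Matrix.head_cons,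
    Matrix.cons_val_two, Matrix.tail_cons, Matrix.cons_val_three, Matrix.cons_val_fin_one,
    mul_zero, zero_mul, mul_one, one_mul, sub_zero, zero_sub, sub_self, neg_zero, neg_neg,
    key, Pi.add_apply, Pi.sub_apply, Pi.smul_apply, smul_eq_mul, Pi.zero_apply] at h0 h1 h2 h3
  simp only [brRRp30, Matrix.cons_val_zero, Matrix.cons_val_one, Matrix.head_cons,
    Matrix.cons_val_two, Matrix.tail_cons, mul_zero, zero_mul, mul_one, one_mul,
    sub_zero, zero_sub, neg_zero, neg_neg, sub_self] at h0 h1 h2 h3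
  have e01 : K ![(0:ℝ), 1, 0, 0] 0 = 0 := by nlinarith [sq_nonneg (K ![(0:ℝ), 1, 0, 0] 0), sq_nonneg (K ![(0:ℝ), 0, 1, 0] 0)]
  have e02 : K ![(0:ℝ), 0, 1, 0] 0 = 0 := by nlinarith [sq_nonneg (K ![(0:ℝ), 1, 0, 0] 0), sq_nonneg (K ![(0:ℝ), 0, 1, 0] 0)]
  simp only [e01, e02, mul_zero, zero_mul, sub_zero, zero_sub, add_zero, zero_add] at h1 h2 h3
  nlinarith [h1, h2, h3, sq_nonneg (K ![(0:ℝ), 0, 1, 0] 1 - K ![(0:ℝ), 1, 0, 0] 2)]
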